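/- Let a, b ∈ ℂ with Re(a) > 0 and Re(b) > 0, let σ ∈ ℂ, and let Ŝ_n(x;a,b) be the symmetric Bannai–Ito polynomials. Then for every n ∈ ℕ and every x ∈ ℂ with 2ix ≠ 1 and 2ix ≠ −1, B(x)·Ŝ_n(x+i) + A(x)·Ŝ_n(x−i) + C(x)·Ŝ_n(−x) − (A(x)+B(x)+C(x))·Ŝ_n(x) + (σ/2)·(Ŝ_n(x) − Ŝ_n(−x)) = Λ_n^{(σ)}·Ŝ_n(x), where A(x) = (ix+a)(ix+b)/(2(1+2ix)), B(x) = (ix−a)(ix−b)/(2(1−2ix)), C(x) = (a+b)/2 − A(x) − B(x), and Λ_{2m}^{(σ)} = m, Λ_{2m+1}^{(σ)} = m + σ. -/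

import Mathlib

open Polynomial Finset Complex

/-- The Pochhammer symbol `(a)ₖ = a(a+1)⋯(a+k-1)` for complex `a`. -/
noncomputable def pochC (a : ℂ) (k : ℕ) : ℂ := (ascPochhammer ℂ k).eval a

/-- The symmetric Bannai–Ito polynomials `Ŝₙ(x;a,b)`, given by their
continuous-dual-Hahn-type terminating ₃F₂ hypergeometric expressions. -/
noncomputable def symBI (a b : ℂ) (n : ℕ) : Polynomial ℂ :=
  let m : ℕ := n / 2
  if Even n then
    C ((-1 : ℂ) ^ m * pochC a m * pochC b m) *
      ∑ k ∈ range (m + 1),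
        C (pochC (-(m : ℂ)) k / (pochC a k * pochC b k * (k.factorial : ℂ))) *
          ∏ j ∈ range k, (C ((j : ℂ) ^ 2) + X ^ 2)
  else
    C ((-1 : ℂ) ^ m * pochC (1 + a) m * pochC (1 + b) m) * X *
      ∑ k ∈ range (m + 1),
        C (pochC (-(m : ℂ)) k / (pochC (1 + a) k * pochC (1 + b) k * (k.factorial : ℂ))) *
          ∏ j ∈ Icc 1 k, (C ((j : ℂ) ^ 2) + X ^ 2)

/-- The eigenvalues `Λₙ⁽ᶜ⁾` of the Dunkl-type operator `D_σ` on the symmetric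
Bannai–Ito polynomials: `Λ_{2m} = m`, `Λ_{2m+1} = m + σ`. -/
noncomputable def symBIeigen (σ : ℂ) (n : ℕ) : ℂ :=
  let m : ℕ := n / 2
  if Even n then (m : ℂ) else (m : ℂ) + σ

/-!
In the variable `s = i x` the shifts `x ↦ x ± i` become `s ↦ s ∓ 1`, and `Ŝ_{2m}` (resp. `Ŝ_{2m+1}`)
is a combination `∑ t_k f_k` of `f_k(s) = ∏_{j<k} (j² - s²)` (resp. `s ∏_{1≤j≤k} (j² - s²)`).
Up to the factor `4(1 - 4s²)`, `D_σ` is lower bidiagonal on this basis,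
`D f_{k+1} = (μ + k + 1) f_{k+1} - (k + 1)(a + k)(b + k) f_k` with `μ = 0` (resp. `μ = σ`, and
`a, b` replaced by `1 + a, 1 + b`), so the recurrence `t_{k+1} (k + 1)(a + k)(b + k) = (k - m) t_k`
of the ₃F₂ coefficients makes `D (∑ t_k f_k) - (μ + m) ∑ t_k f_k` telescope to zero.

The bidiagonal action rests on shift identities such as
`-s f_{k+1}(s - 1) = (s - 1)(k - s)(k + 1 - s) f_k(s)`, so it is only obtained after multiplying by
`s` (by `1 - s²` in the odd case). It is therefore proved in `K[X]` at `s = X`, where these factors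
are not zero divisors, and then evaluated at an arbitrary `s`.
-/

namespace SymBannaiIto

section CommRing

variable {R : Type*} [CommRing R]

theorem sum_mul_eq_of_bidiagonal (m : ℕ) (μ : R) {t c g v : ℕ → R}
    (ht : ∀ k, t (k + 1) * ((k + 1) * c k) = (k - m) * t k)
    (hv₀ : v 0 = μ * g 0)
    (hv : ∀ k, v (k + 1) = (μ + (k + 1)) * g (k + 1) - (k + 1) * c k * g k) :
    ∑ k ∈ range (m + 1), t k * v k = (μ + m) * ∑ k ∈ range (m + 1), t k * g k := by
  set e : ℕ → R := fun k => (k - m) * (t k * g k)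
  have step : ∀ k,
      t (k + 1) * v (k + 1) - (μ + m) * (t (k + 1) * g (k + 1)) = e (k + 1) - e k := by
    intro k
    simp only [e, hv]
    push_cast
    linear_combination (-g k) * ht k
  rw [← sub_eq_zero, mul_sum, ← sum_sub_distrib, sum_range_succ',
    sum_congr rfl fun k _ => step k, sum_range_sub, hv₀]
  simp only [e]
  ring

def evenBasis (k : ℕ) (s : R) : R := ∏ j ∈ range k, ((j : R) ^ 2 - s ^ 2)

def oddBasis (k : ℕ) (s : R) : R := s * ∏ j ∈ Icc 1 k, ((j : R) ^ 2 - s ^ 2)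

theorem evenBasis_zero (s : R) : evenBasis 0 s = 1 := prod_range_zero _

theorem evenBasis_succ (k : ℕ) (s : R) :
    evenBasis (k + 1) s = evenBasis k s * ((k : R) ^ 2 - s ^ 2) :=
  prod_range_succ _ _

theorem evenBasis_neg (k : ℕ) (s : R) : evenBasis k (-s) = evenBasis k s := by
  simp only [evenBasis, neg_sq]

theorem oddBasis_zero (s : R) : oddBasis 0 s = s := by simp [oddBasis]

theorem oddBasis_succ (k : ℕ) (s : R) :
    oddBasis (k + 1) s = oddBasis k s * (((k : R) + 1) ^ 2 - s ^ 2) := by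
  rw [oddBasis, oddBasis, prod_Icc_succ_top (Nat.le_add_left 1 k)]
  push_cast
  ring

theorem oddBasis_neg (k : ℕ) (s : R) : oddBasis k (-s) = -oddBasis k s := by
  simp only [oddBasis, neg_sq, neg_mul]

theorem neg_mul_evenBasis_succ_sub_one (k : ℕ) (s : R) :
    -s * evenBasis (k + 1) (s - 1) = (s - 1) * (k - s) * (k + 1 - s) * evenBasis k s := by
  induction k with
  | zero => simp only [evenBasis_succ, evenBasis_zero]; ring
  | succ k ih =>
    rw [evenBasis_succ (k + 1), evenBasis_succ k s]
    push_cast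
    linear_combination ((k + 1 : R) ^ 2 - (s - 1) ^ 2) * ih

theorem mul_evenBasis_succ_add_one (k : ℕ) (s : R) :
    s * evenBasis (k + 1) (s + 1) = -(s + 1) * (k + s) * (k + 1 + s) * evenBasis k s := by
  have h := neg_mul_evenBasis_succ_sub_one k (-s)
  rw [show -s - 1 = -(s + 1) by ring, evenBasis_neg, evenBasis_neg] at h
  linear_combination h

theorem one_sub_mul_oddBasis_succ_sub_one (k : ℕ) (s : R) :
    (1 - s) * oddBasis (k + 1) (s - 1) = (s - 1) * (k + 1 - s) * (k + 2 - s) * oddBasis k s := by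
  induction k with
  | zero => simp only [oddBasis_succ, oddBasis_zero]; ring
  | succ k ih =>
    rw [oddBasis_succ (k + 1), oddBasis_succ k s]
    push_cast
    linear_combination ((k + 1 + 1 : R) ^ 2 - (s - 1) ^ 2) * ih

theorem one_add_mul_oddBasis_succ_add_one (k : ℕ) (s : R) :
    (1 + s) * oddBasis (k + 1) (s + 1) = -(s + 1) * (k + 1 + s) * (k + 2 + s) * oddBasis k s := by
  have h := one_sub_mul_oddBasis_succ_sub_one k (-s)
  rw [show -s - 1 = -(s + 1) by ring, oddBasis_neg, oddBasis_neg] at h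
  linear_combination -h

/-- `4(1 - 4s²)` times the operator `D_σ` in the variable `s = i x`, in which the shifts
`x ↦ x ± i` become `s ↦ s ∓ 1`; the four coefficients are `4(1 - 4s²)` times `B`, `A`, `C`,
`σ/2`. -/
def dunklOp (a b σ : R) (F : R → R) (s : R) : R :=
  2 * (1 + 2 * s) * (s - a) * (s - b) * (F (s - 1) - F s)
    + 2 * (1 - 2 * s) * (s + a) * (s + b) * (F (s + 1) - F s)
    + (2 * (1 - 4 * s ^ 2) * (a + b) - 2 * (1 - 2 * s) * (s + a) * (s + b)
        - 2 * (1 + 2 * s) * (s - a) * (s - b)) * (F (-s) - F s)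
    + 2 * (1 - 4 * s ^ 2) * σ * (F s - F (-s))

theorem dunklOp_sum (a b σ : R) (S : Finset ℕ) (t : ℕ → R) (f : ℕ → R → R) (s : R) :
    dunklOp a b σ (fun z => ∑ k ∈ S, t k * f k z) s
      = ∑ k ∈ S, t k * dunklOp a b σ (f k) s := by
  simp only [dunklOp, ← sum_sub_distrib, mul_sum, ← sum_add_distrib]
  exact sum_congr rfl fun k _ => by ring

theorem dunklOp_evenBasis_zero (a b σ s : R) : dunklOp a b σ (evenBasis 0) s = 0 := by
  simp [dunklOp, evenBasis_zero]

theorem dunklOp_oddBasis_zero (a b σ s : R) :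
    dunklOp a b σ (oddBasis 0) s = σ * (4 * (1 - 4 * s ^ 2) * oddBasis 0 s) := by
  simp only [dunklOp, oddBasis_zero]
  ring

section IsDomain

variable [IsDomain R]

theorem dunklOp_evenBasis_succ {s : R} (hs : s ≠ 0) (a b σ : R) (k : ℕ) :
    dunklOp a b σ (evenBasis (k + 1)) s = (k + 1) * (4 * (1 - 4 * s ^ 2) * evenBasis (k + 1) s)
      - (k + 1) * ((a + k) * (b + k)) * (4 * (1 - 4 * s ^ 2) * evenBasis k s) := by
  apply mul_left_cancel₀ hs
  simp only [dunklOp, evenBasis_neg]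
  linear_combination (-(2 * (1 + 2 * s) * (s - a) * (s - b))) * neg_mul_evenBasis_succ_sub_one k s
    + 2 * (1 - 2 * s) * (s + a) * (s + b) * mul_evenBasis_succ_add_one k s
    - s * (2 * (1 + 2 * s) * (s - a) * (s - b) + 2 * (1 - 2 * s) * (s + a) * (s + b)
      + (k + 1) * (4 * (1 - 4 * s ^ 2))) * evenBasis_succ k s

theorem dunklOp_oddBasis_succ {s : R} (hs : s ^ 2 ≠ 1) (a b σ : R) (k : ℕ) :
    dunklOp a b σ (oddBasis (k + 1)) s
      = (σ + (k + 1)) * (4 * (1 - 4 * s ^ 2) * oddBasis (k + 1) s)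
      - (k + 1) * ((1 + a + k) * (1 + b + k)) * (4 * (1 - 4 * s ^ 2) * oddBasis k s) := by
  apply mul_left_cancel₀ (sub_ne_zero.mpr hs.symm)
  simp only [dunklOp, oddBasis_neg]
  linear_combination (1 + s) * (2 * (1 + 2 * s) * (s - a) * (s - b))
      * one_sub_mul_oddBasis_succ_sub_one k s
    + (1 - s) * (2 * (1 - 2 * s) * (s + a) * (s + b)) * one_add_mul_oddBasis_succ_add_one k s
    + (1 - s ^ 2) * (-(2 * (1 + 2 * s) * (s - a) * (s - b)) - 2 * (1 - 2 * s) * (s + a) * (s + b)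
      - 2 * (2 * (1 - 4 * s ^ 2) * (a + b) - 2 * (1 - 2 * s) * (s + a) * (s + b)
        - 2 * (1 + 2 * s) * (s - a) * (s - b)) + 4 * (1 - 4 * s ^ 2) * σ
      - (σ + (k + 1)) * (4 * (1 - 4 * s ^ 2))) * oddBasis_succ k s

theorem dunklOp_sum_evenBasis_of_ne_zero {s : R} (hs : s ≠ 0) (a b σ : R) (m : ℕ)
    {t : ℕ → R} (ht : ∀ k, t (k + 1) * ((k + 1) * ((a + k) * (b + k))) = (k - m) * t k) :
    dunklOp a b σ (fun z => ∑ k ∈ range (m + 1), t k * evenBasis k z) s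
      = 4 * (1 - 4 * s ^ 2) * m * ∑ k ∈ range (m + 1), t k * evenBasis k s := by
  rw [dunklOp_sum, sum_mul_eq_of_bidiagonal m 0 (g := fun k => 4 * (1 - 4 * s ^ 2) * evenBasis k s)
    ht (by rw [dunklOp_evenBasis_zero, zero_mul])
    fun k => by rw [dunklOp_evenBasis_succ hs, zero_add], mul_sum, mul_sum]
  exact sum_congr rfl fun k _ => by ring

theorem dunklOp_sum_oddBasis_of_sq_ne_one {s : R} (hs : s ^ 2 ≠ 1) (a b σ : R) (m : ℕ)
    {t : ℕ → R}
    (ht : ∀ k, t (k + 1) * ((k + 1) * ((1 + a + k) * (1 + b + k))) = (k - m) * t k) :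
    dunklOp a b σ (fun z => ∑ k ∈ range (m + 1), t k * oddBasis k z) s
      = 4 * (1 - 4 * s ^ 2) * (m + σ) * ∑ k ∈ range (m + 1), t k * oddBasis k s := by
  rw [dunklOp_sum, sum_mul_eq_of_bidiagonal m σ (g := fun k => 4 * (1 - 4 * s ^ 2) * oddBasis k s)
    ht (dunklOp_oddBasis_zero a b σ s) (dunklOp_oddBasis_succ hs a b σ), mul_sum, mul_sum]
  exact sum_congr rfl fun k _ => by ring

end IsDomain

end CommRing

section Polynomial

variable {K : Type*} [CommRing K]

theorem eval_evenBasis (k : ℕ) (p : K[X]) (z : K) :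
    (evenBasis k p).eval z = evenBasis k (p.eval z) := by
  simp [evenBasis, eval_prod]

theorem eval_oddBasis (k : ℕ) (p : K[X]) (z : K) :
    (oddBasis k p).eval z = oddBasis k (p.eval z) := by
  simp [oddBasis, eval_prod]

variable [IsDomain K]

theorem dunklOp_sum_evenBasis (a b σ : K) (m : ℕ) {t : ℕ → K}
    (ht : ∀ k, t (k + 1) * ((k + 1) * ((a + k) * (b + k))) = (k - m) * t k) (s : K) :
    dunklOp a b σ (fun z => ∑ k ∈ range (m + 1), t k * evenBasis k z) s
      = 4 * (1 - 4 * s ^ 2) * m * ∑ k ∈ range (m + 1), t k * evenBasis k s := by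
  have h := congrArg (eval s) <| dunklOp_sum_evenBasis_of_ne_zero X_ne_zero (C a) (C b) (C σ) m
    (t := fun k => C (t k)) fun k => by simpa using congrArg C (ht k)
  simpa [dunklOp, eval_finsetSum, eval_evenBasis] using h

theorem dunklOp_sum_oddBasis (a b σ : K) (m : ℕ) {t : ℕ → K}
    (ht : ∀ k, t (k + 1) * ((k + 1) * ((1 + a + k) * (1 + b + k))) = (k - m) * t k) (s : K) :
    dunklOp a b σ (fun z => ∑ k ∈ range (m + 1), t k * oddBasis k z) s
      = 4 * (1 - 4 * s ^ 2) * (m + σ) * ∑ k ∈ range (m + 1), t k * oddBasis k s := by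
  have hX : (X : K[X]) ^ 2 ≠ 1 := fun h => by simpa using congrArg (eval 0) h
  have h := congrArg (eval s) <| dunklOp_sum_oddBasis_of_sq_ne_one hX (C a) (C b) (C σ) m
    (t := fun k => C (t k)) fun k => by simpa using congrArg C (ht k)
  simpa [dunklOp, eval_finsetSum, eval_oddBasis] using h

end Polynomial

theorem add_natCast_ne_zero_of_re_pos {a : ℂ} (ha : 0 < a.re) (j : ℕ) : a + j ≠ 0 := by
  intro h
  have := congrArg re h
  simp only [add_re, natCast_re, zero_re] at this
  linarith [j.cast_nonneg (α := ℝ)]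

theorem pochC_succ (a : ℂ) (k : ℕ) : pochC a (k + 1) = pochC a k * (a + k) :=
  ascPochhammer_succ_eval k a

theorem pochC_ne_zero {a : ℂ} (ha : ∀ j : ℕ, a + j ≠ 0) (k : ℕ) : pochC a k ≠ 0 := by
  rw [pochC, ne_eq, ascPochhammer_eval_eq_zero_iff]
  rintro ⟨j, -, hj⟩
  exact ha j (by rw [hj, add_neg_cancel])

noncomputable def hypCoeff (a b : ℂ) (m k : ℕ) : ℂ :=
  pochC (-(m : ℂ)) k / (pochC a k * pochC b k * (k.factorial : ℂ))

theorem hypCoeff_succ_mul {a b : ℂ} (ha : ∀ j : ℕ, a + j ≠ 0)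
    (hb : ∀ j : ℕ, b + j ≠ 0) (m k : ℕ) :
    hypCoeff a b m (k + 1) * ((k + 1) * ((a + k) * (b + k)))
      = (k - m) * hypCoeff a b m k := by
  have hpa := pochC_ne_zero ha k
  have hpb := pochC_ne_zero hb k
  have hak := ha k
  have hbk := hb k
  rw [hypCoeff, hypCoeff, pochC_succ, pochC_succ, pochC_succ, Nat.factorial_succ]
  push_cast
  field_simp
  ring

theorem symBI_eval_neg_I_mul_of_even (a b : ℂ) {n : ℕ} (hn : Even n) (s : ℂ) :
    (symBI a b n).eval (-I * s) = ∑ k ∈ range (n / 2 + 1),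
      ((-1) ^ (n / 2) * pochC a (n / 2) * pochC b (n / 2) * hypCoeff a b (n / 2) k)
        * evenBasis k s := by
  have hsq : (-I * s) ^ 2 = -s ^ 2 := by linear_combination s ^ 2 * I_sq
  simp only [symBI, hn, if_true, eval_mul, eval_C, eval_finsetSum, eval_prod, eval_add, eval_pow,
    eval_X, hsq, ← sub_eq_add_neg, mul_sum, hypCoeff, evenBasis]
  exact sum_congr rfl fun k _ => by ring

theorem symBI_eval_neg_I_mul_of_not_even (a b : ℂ) {n : ℕ} (hn : ¬Even n) (s : ℂ) :
    (symBI a b n).eval (-I * s) = ∑ k ∈ range (n / 2 + 1),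
      ((-1) ^ (n / 2) * pochC (1 + a) (n / 2) * pochC (1 + b) (n / 2) * (-I) *
        hypCoeff (1 + a) (1 + b) (n / 2) k) * oddBasis k s := by
  have hsq : (-I * s) ^ 2 = -s ^ 2 := by linear_combination s ^ 2 * I_sq
  simp only [symBI, hn, if_false, eval_mul, eval_C, eval_finsetSum, eval_prod, eval_add, eval_pow,
    eval_X, hsq, ← sub_eq_add_neg, mul_sum, hypCoeff, oddBasis]
  exact sum_congr rfl fun k _ => by ring

theorem dunklOp_symBI {a b : ℂ} (ha : 0 < a.re) (hb : 0 < b.re) (σ : ℂ) (n : ℕ) (s : ℂ) :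
    dunklOp a b σ (fun z => (symBI a b n).eval (-I * z)) s
      = 4 * (1 - 4 * s ^ 2) * symBIeigen σ n * (symBI a b n).eval (-I * s) := by
  by_cases hn : Even n
  · simp only [symBI_eval_neg_I_mul_of_even a b hn, symBIeigen, hn, if_true]
    have ht := hypCoeff_succ_mul (add_natCast_ne_zero_of_re_pos ha)
      (add_natCast_ne_zero_of_re_pos hb) (n / 2)
    refine dunklOp_sum_evenBasis a b σ _ (fun k => ?_) s
    linear_combination (-1) ^ (n / 2) * pochC a (n / 2) * pochC b (n / 2) * ht k
  · have ha' : 0 < (1 + a).re := by simp only [add_re, one_re]; linarith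
    have hb' : 0 < (1 + b).re := by simp only [add_re, one_re]; linarith
    simp only [symBI_eval_neg_I_mul_of_not_even a b hn, symBIeigen, hn, if_false]
    have ht := hypCoeff_succ_mul (add_natCast_ne_zero_of_re_pos ha')
      (add_natCast_ne_zero_of_re_pos hb') (n / 2)
    refine dunklOp_sum_oddBasis a b σ _ (fun k => ?_) s
    linear_combination (-1) ^ (n / 2) * pochC (1 + a) (n / 2) * pochC (1 + b) (n / 2) * (-I) * ht k

end SymBannaiIto

theorem symBannaiIto_difference_equation (a b σ : ℂ)
    (ha : a.re > 0) (hb : b.re > 0)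
    (n : ℕ) (x : ℂ) (hx1 : 2 * I * x ≠ 1) (hx2 : 2 * I * x ≠ -1) :
    ((I * x - a) * (I * x - b) / (2 * (1 - 2 * I * x))) * (symBI a b n).eval (x + I)
      + ((I * x + a) * (I * x + b) / (2 * (1 + 2 * I * x))) * (symBI a b n).eval (x - I)
      + ((a + b) / 2
          - (I * x + a) * (I * x + b) / (2 * (1 + 2 * I * x))
          - (I * x - a) * (I * x - b) / (2 * (1 - 2 * I * x))) *
          (symBI a b n).eval (-x)
      - ((I * x + a) * (I * x + b) / (2 * (1 + 2 * I * x))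
          + (I * x - a) * (I * x - b) / (2 * (1 - 2 * I * x))
          + ((a + b) / 2
            - (I * x + a) * (I * x + b) / (2 * (1 + 2 * I * x))
            - (I * x - a) * (I * x - b) / (2 * (1 - 2 * I * x)))) *
          (symBI a b n).eval x
      + (σ / 2) * ((symBI a b n).eval x - (symBI a b n).eval (-x))
      = symBIeigen σ n * (symBI a b n).eval x := by
  -- the denominators in the shape `field_simp` normalizes them to
  have h₁ : 1 - I * x * 2 ≠ 0 := fun h => hx1 (by linear_combination -h)
  have h₂ : 1 + I * x * 2 ≠ 0 := fun h => hx2 (by linear_combination h)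
  have key := SymBannaiIto.dunklOp_symBI ha hb σ n (I * x)
  simp only [SymBannaiIto.dunklOp] at key
  rw [show -I * (I * x - 1) = x + I by linear_combination -x * I_sq,
    show -I * (I * x + 1) = x - I by linear_combination -x * I_sq,
    show -I * -(I * x) = -x by linear_combination x * I_sq,
    show -I * (I * x) = x by linear_combination -x * I_sq] at key
  field_simp
  linear_combination key / 2
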